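/- For every κ > 1 there exists a constant C_κ > 0 such that for every g ∈ GL_d(ℝ) and all nonzero x, y ∈ ℝ^d: |log(‖gx‖/‖x‖) − log(‖gy‖/‖y‖)| ≤ C_κ * (1 + log N(g))^κ * H_{κ-1}(d(x̄, ȳ)), where d(x̄, ȳ) = ‖x ∧ y‖/(‖x‖ ‖y‖), H_q(0) = 0 and H_q(t) = |log(t e^{-q-1})|^{-q} for t ∈ (0,1], and N(g) = max(‖g‖, ‖g^{-1}‖). -/

import Mathlib

open scoped RealInnerProductSpace

noncomputable instance (d : ℕ) : MeasurableSpace (GL (Fin d) ℝ) := borel _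

/-- `N g = max(‖g‖, ‖g⁻¹‖)` with the Euclidean operator norm. -/
noncomputable def matN {d : ℕ} (g : GL (Fin d) ℝ) : ℝ :=
  max ‖Matrix.toEuclideanCLM (𝕜 := ℝ) ((g : GL (Fin d) ℝ) : Matrix (Fin d) (Fin d) ℝ)‖
    ‖Matrix.toEuclideanCLM (𝕜 := ℝ) ((g⁻¹ : GL (Fin d) ℝ) : Matrix (Fin d) (Fin d) ℝ)‖

/-- The distance `d(x̄, ȳ) = ‖x ∧ y‖ / (‖x‖ ‖y‖)` on projective space, where
`‖x ∧ y‖² = ‖x‖² ‖y‖² - ⟨x, y⟩²` (Lagrange's identity). -/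
noncomputable def projDist {d : ℕ} (x y : EuclideanSpace ℝ (Fin d)) : ℝ :=
  Real.sqrt (‖x‖ ^ 2 * ‖y‖ ^ 2 - ⟪x, y⟫ ^ 2) / (‖x‖ * ‖y‖)

/-- `H q (0) = 0` and `H q t = |log (t e^{-q-1})|^{-q}` for `t ∈ (0,1]`. -/
noncomputable def Hfun (q t : ℝ) : ℝ :=
  if t = 0 then 0 else |Real.log (t * Real.exp (-(q + 1)))| ^ (-q)

/-!
For unit vectors the cocycle `u ↦ log ‖g u‖` is Lipschitz with constant `N(g)²`, and it is even in
`u`; comparing `x / ‖x‖` with the closer of `± y / ‖y‖` gives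
`|σ(g, x̄) - σ(g, ȳ)| ≤ √2 N(g)² d(x̄, ȳ)`. This is interpolated with the trivial bound `2 log N(g)`.
Put `L = 1 + log N(g)`. If `d ≤ e^{-3L}` then `N(g)² d ≤ d^{1/3}`, and a power of `d` is dominated by
the power `H_{κ-1}(d)` of `1 / |log d|`. Otherwise `|log d| < 3L`, so `H_{κ-1}(d) ≳ L^{1-κ}` and
`log N(g) ≤ L ≲ L^κ H_{κ-1}(d)`.
-/

open Real

section LeftInverse

variable {E F : Type*} [NormedAddCommGroup E] [NormedSpace ℝ E] [NormedAddCommGroup F]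
  [NormedSpace ℝ F] {T : E →L[ℝ] F} {S : F →L[ℝ] E} {N : ℝ}

lemma norm_le_mul_norm_apply_of_leftInverse (hS : ‖S‖ ≤ N) (hST : Function.LeftInverse S T)
    (x : E) : ‖x‖ ≤ N * ‖T x‖ := by
  simpa only [hST x] using S.le_of_opNorm_le hS (T x)

lemma one_le_of_leftInverse (hT : ‖T‖ ≤ N) (hS : ‖S‖ ≤ N) (hST : Function.LeftInverse S T)
    {x : E} (hx : x ≠ 0) : 1 ≤ N := by
  have hN : 0 ≤ N := (norm_nonneg T).trans hT
  have h := (norm_le_mul_norm_apply_of_leftInverse hS hST x).trans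
    (mul_le_mul_of_nonneg_left (T.le_of_opNorm_le hT x) hN)
  have hN2 : 1 ≤ N * N := le_of_mul_le_mul_left (by linarith) (norm_pos_iff.2 hx)
  nlinarith

lemma abs_log_le_log_of_le_of_inv_le {r N : ℝ} (hr : 0 < r) (h : r ≤ N) (h' : r⁻¹ ≤ N) :
    |log r| ≤ log N := by
  rw [abs_le, neg_le, ← log_inv]
  exact ⟨log_le_log (inv_pos.2 hr) h', log_le_log hr h⟩

lemma abs_log_norm_apply_div_le (hT : ‖T‖ ≤ N) (hS : ‖S‖ ≤ N) (hST : Function.LeftInverse S T)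
    {x : E} (hx : x ≠ 0) : |log (‖T x‖ / ‖x‖)| ≤ log N := by
  have hx' : 0 < ‖x‖ := norm_pos_iff.2 hx
  have hTx : 0 < ‖T x‖ := norm_pos_iff.2 fun h => hx (by simpa [h] using (hST x).symm)
  refine abs_log_le_log_of_le_of_inv_le (div_pos hTx hx') ?_ ?_
  · exact (div_le_iff₀ hx').2 (T.le_of_opNorm_le hT x)
  · rw [inv_div, div_le_iff₀ hTx]
    exact norm_le_mul_norm_apply_of_leftInverse hS hST x

lemma log_sub_log_le_mul_abs_sub {a b N : ℝ} (ha : 0 < a) (hb : 0 < b) (hNb : 1 ≤ N * b) :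
    log a - log b ≤ N * |a - b| :=
  calc log a - log b = log (a / b) := (log_div ha.ne' hb.ne').symm
    _ ≤ a / b - 1 := log_le_sub_one_of_pos (div_pos ha hb)
    _ = (a - b) / b := by field_simp
    _ ≤ |a - b| / b := by gcongr; exact le_abs_self _
    _ ≤ N * |a - b| := by rw [div_le_iff₀ hb]; nlinarith [abs_nonneg (a - b)]

lemma abs_log_sub_log_le_mul_abs_sub {a b N : ℝ} (ha : 0 < a) (hb : 0 < b) (hNa : 1 ≤ N * a)
    (hNb : 1 ≤ N * b) : |log a - log b| ≤ N * |a - b| := by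
  rw [abs_le, neg_le, neg_sub]
  refine ⟨?_, log_sub_log_le_mul_abs_sub ha hb hNb⟩
  rw [abs_sub_comm]
  exact log_sub_log_le_mul_abs_sub hb ha hNa

lemma abs_log_norm_apply_sub_le (hT : ‖T‖ ≤ N) (hS : ‖S‖ ≤ N) (hST : Function.LeftInverse S T)
    {u v : E} (hu : ‖u‖ = 1) (hv : ‖v‖ = 1) :
    |log ‖T u‖ - log ‖T v‖| ≤ N ^ 2 * ‖u - v‖ := by
  have hN : 0 ≤ N := (norm_nonneg T).trans hT
  have hNu : 1 ≤ N * ‖T u‖ := hu ▸ norm_le_mul_norm_apply_of_leftInverse hS hST u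
  have hNv : 1 ≤ N * ‖T v‖ := hv ▸ norm_le_mul_norm_apply_of_leftInverse hS hST v
  have hTu : 0 < ‖T u‖ := by nlinarith [norm_nonneg (T u)]
  have hTv : 0 < ‖T v‖ := by nlinarith [norm_nonneg (T v)]
  calc |log ‖T u‖ - log ‖T v‖| ≤ N * |‖T u‖ - ‖T v‖| :=
        abs_log_sub_log_le_mul_abs_sub hTu hTv hNu hNv
    _ ≤ N * ‖T (u - v)‖ := by
        gcongr
        rw [map_sub]
        exact abs_norm_sub_norm_le _ _
    _ ≤ N * (N * ‖u - v‖) := by gcongr; exact T.le_of_opNorm_le hT _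
    _ = N ^ 2 * ‖u - v‖ := by ring

lemma log_norm_apply_div_norm (x : E) : log (‖T x‖ / ‖x‖) = log ‖T (‖x‖⁻¹ • x)‖ := by
  rw [map_smul, norm_smul, norm_inv, norm_norm, inv_mul_eq_div]

end LeftInverse

section InnerProductSpace

variable {E F : Type*} [NormedAddCommGroup E] [InnerProductSpace ℝ E] [NormedAddCommGroup F]
  [NormedSpace ℝ F]

lemma min_norm_sub_norm_add_le {u v : E} (hu : ‖u‖ = 1) (hv : ‖v‖ = 1) :
    min ‖u - v‖ ‖u + v‖ ≤ √2 * √(1 - ⟪u, v⟫ ^ 2) := by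
  have hc : |⟪u, v⟫| ≤ 1 := by simpa [hu, hv] using abs_real_inner_le_norm u v
  rw [abs_le] at hc
  rw [← sqrt_mul zero_le_two]
  rcases le_total 0 ⟪u, v⟫ with hc0 | hc0
  · refine (min_le_left _ _).trans ((le_sqrt (norm_nonneg _) (by nlinarith)).2 ?_)
    rw [norm_sub_sq_real, hu, hv]
    nlinarith
  · refine (min_le_right _ _).trans ((le_sqrt (norm_nonneg _) (by nlinarith)).2 ?_)
    rw [norm_add_sq_real, hu, hv]
    nlinarith

lemma abs_log_norm_apply_div_sub_le {T : E →L[ℝ] F} {S : F →L[ℝ] E} {N : ℝ} (hT : ‖T‖ ≤ N)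
    (hS : ‖S‖ ≤ N) (hST : Function.LeftInverse S T) {x y : E} (hx : x ≠ 0) (hy : y ≠ 0) :
    |log (‖T x‖ / ‖x‖) - log (‖T y‖ / ‖y‖)| ≤
      √2 * N ^ 2 * √(1 - ⟪‖x‖⁻¹ • x, ‖y‖⁻¹ • y⟫ ^ 2) := by
  set u := ‖x‖⁻¹ • x
  set v := ‖y‖⁻¹ • y
  have hu : ‖u‖ = 1 := norm_smul_inv_norm hx
  have hv : ‖v‖ = 1 := norm_smul_inv_norm hy
  have hsub := abs_log_norm_apply_sub_le hT hS hST hu hv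
  have hadd := abs_log_norm_apply_sub_le hT hS hST hu (v := -v) (by rw [norm_neg, hv])
  rw [map_neg, norm_neg, sub_neg_eq_add] at hadd
  rw [log_norm_apply_div_norm, log_norm_apply_div_norm]
  calc _ ≤ N ^ 2 * min ‖u - v‖ ‖u + v‖ := by
        rw [mul_min_of_nonneg _ _ (sq_nonneg N)]
        exact le_min hsub hadd
    _ ≤ N ^ 2 * (√2 * √(1 - ⟪u, v⟫ ^ 2)) := by gcongr; exact min_norm_sub_norm_add_le hu hv
    _ = _ := by ring

end InnerProductSpace

section ProjDist

variable {d : ℕ} {x y : EuclideanSpace ℝ (Fin d)}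

lemma projDist_nonneg (x y : EuclideanSpace ℝ (Fin d)) : 0 ≤ projDist x y := by
  unfold projDist
  positivity

lemma projDist_eq_sqrt (hx : x ≠ 0) (hy : y ≠ 0) :
    projDist x y = √(1 - ⟪‖x‖⁻¹ • x, ‖y‖⁻¹ • y⟫ ^ 2) := by
  have hx' : 0 < ‖x‖ := norm_pos_iff.2 hx
  have hy' : 0 < ‖y‖ := norm_pos_iff.2 hy
  have h : 1 - ⟪‖x‖⁻¹ • x, ‖y‖⁻¹ • y⟫ ^ 2 =
      (‖x‖ ^ 2 * ‖y‖ ^ 2 - ⟪x, y⟫ ^ 2) / (‖x‖ * ‖y‖) ^ 2 := by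
    rw [real_inner_smul_left, real_inner_smul_right]
    field_simp
  rw [h, sqrt_div' _ (sq_nonneg _), sqrt_sq (by positivity), projDist]

lemma projDist_le_one (hx : x ≠ 0) (hy : y ≠ 0) : projDist x y ≤ 1 := by
  rw [projDist_eq_sqrt hx hy, sqrt_le_one]
  nlinarith [sq_nonneg ⟪‖x‖⁻¹ • x, ‖y‖⁻¹ • y⟫]

end ProjDist

lemma Matrix.leftInverse_toEuclideanCLM_inv {n : Type*} [Fintype n] [DecidableEq n]
    (g : GL n ℝ) :
    Function.LeftInverse (Matrix.toEuclideanCLM (𝕜 := ℝ) (g⁻¹ : GL n ℝ).val)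
      (Matrix.toEuclideanCLM (𝕜 := ℝ) g.val) := fun z => by
  rw [← mul_apply_eq_comp, ← map_mul, Units.inv_mul, map_one, one_apply_eq_self]

lemma Hfun_nonneg (q t : ℝ) : 0 ≤ Hfun q t := by
  unfold Hfun
  split_ifs <;> positivity

section LogarithmicModulus

variable {q : ℝ}

lemma Hfun_of_ne_zero {t : ℝ} (ht0 : t ≠ 0) (ht : log t ≤ q + 1) :
    Hfun q t = (q + 1 - log t) ^ (-q) := by
  rw [Hfun, if_neg ht0, log_mul ht0 (exp_ne_zero _), log_exp, abs_of_nonpos (by linarith)]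
  ring_nf

lemma rpow_le_mul_exp {c a : ℝ} (hq : 0 < q) (hc : 0 < c) (ha : 0 ≤ a) :
    a ^ q ≤ (c * q) ^ q * exp (a / c) := by
  rcases ha.eq_or_lt with rfl | ha
  · rw [zero_rpow hq.ne']
    positivity
  have hcq : 0 < c * q := mul_pos hc hq
  calc a ^ q = (c * q) ^ q * (a / (c * q)) ^ q := by
        rw [← mul_rpow hcq.le (by positivity), mul_div_cancel₀ _ hcq.ne']
    _ ≤ (c * q) ^ q * exp (a / c) := by
        gcongr
        rw [rpow_def_of_pos (by positivity), exp_le_exp]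
        calc log (a / (c * q)) * q ≤ a / (c * q) * q := by
              gcongr; exact log_le_self (by positivity)
          _ = a / c := by field_simp

lemma rpow_one_third_le_mul_Hfun (hq : 0 < q) {t : ℝ} (ht0 : 0 < t) (ht1 : t ≤ 1) :
    t ^ (1 / 3 : ℝ) ≤ exp ((q + 1) / 3) * (3 * q) ^ q * Hfun q t := by
  have hlog : log t ≤ 0 := log_nonpos ht0.le ht1
  set a := q + 1 - log t
  have ha : 0 < a := by linarith
  rw [Hfun_of_ne_zero ht0.ne' (by linarith), rpow_neg ha.le, rpow_def_of_pos ht0,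
    show log t * (1 / 3) = (q + 1) / 3 + -(a / 3) by ring, exp_add, mul_assoc]
  gcongr
  rw [← div_eq_mul_inv, le_div_iff₀ (rpow_pos_of_pos ha q)]
  calc exp (-(a / 3)) * a ^ q ≤ exp (-(a / 3)) * ((3 * q) ^ q * exp (a / 3)) := by
        gcongr; exact rpow_le_mul_exp hq three_pos ha.le
    _ = (3 * q) ^ q := by rw [mul_left_comm, ← exp_add, neg_add_cancel, exp_zero, mul_one]

lemma exp_two_mul_mul_le_rpow_one_third {L t : ℝ} (ht0 : 0 < t) (ht : t ≤ exp (-(3 * L))) :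
    exp (2 * L) * t ≤ t ^ (1 / 3 : ℝ) := by
  have hlog : log t ≤ -(3 * L) := (log_le_iff_le_exp ht0).2 ht
  rw [rpow_def_of_pos ht0]
  nth_rewrite 1 [← exp_log ht0]
  rw [← exp_add, exp_le_exp]
  linarith

lemma le_mul_rpow_mul_Hfun_of_exp_lt (hq : 0 < q) {L t : ℝ} (hL : 1 ≤ L)
    (ht : exp (-(3 * L)) < t) (ht1 : t ≤ 1) :
    L ≤ (q + 4) ^ q * L ^ (q + 1) * Hfun q t := by
  have ht0 : 0 < t := (exp_pos _).trans ht
  have hlog : -(3 * L) < log t := (lt_log_iff_exp_lt ht0).2 ht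
  have hlog' : log t ≤ 0 := log_nonpos ht0.le ht1
  set a := q + 1 - log t
  have ha : 0 < a := by linarith
  have haL : a ≤ (q + 4) * L := by nlinarith
  rw [Hfun_of_ne_zero ht0.ne' (by linarith)]
  calc L = L * 1 := (mul_one L).symm
    _ ≤ L * (((q + 4) * L) ^ q / a ^ q) := by
        gcongr
        rw [one_le_div (rpow_pos_of_pos ha q)]
        gcongr
    _ = (q + 4) ^ q * L ^ (q + 1) * a ^ (-q) := by
        rw [mul_rpow (by linarith) (by linarith), rpow_add_one (by linarith), rpow_neg ha.le]
        ring

lemma le_mul_one_add_log_rpow_mul_Hfun (hq : 0 < q) {N t D B : ℝ} (hN : 1 ≤ N) (hB : 0 ≤ B)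
    (ht0 : 0 ≤ t) (ht1 : t ≤ 1) (hlip : D ≤ B * N ^ 2 * t) (hbdd : D ≤ B * log N) :
    D ≤ B * (exp ((q + 1) / 3) * (3 * q) ^ q + (q + 4) ^ q) * (1 + log N) ^ (q + 1) *
      Hfun q t := by
  set L := 1 + log N
  have hL : 1 ≤ L := by linarith [log_nonneg hN]
  have hLq : 1 ≤ L ^ (q + 1) := one_le_rpow hL (by linarith)
  have hA : 0 ≤ exp ((q + 1) / 3) * (3 * q) ^ q := by positivity
  have hH := Hfun_nonneg q t
  rcases ht0.eq_or_lt with rfl | ht0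
  · simpa [Hfun] using hlip
  rcases le_or_gt t (exp (-(3 * L))) with hsmall | hlarge
  · have hN2 : N ^ 2 ≤ exp (2 * L) := by
      rw [← exp_log (by linarith : 0 < N), ← exp_nat_mul, exp_le_exp]
      push_cast
      linarith
    calc D ≤ B * (N ^ 2 * t) := by rw [← mul_assoc]; exact hlip
      _ ≤ B * (exp (2 * L) * t) := by gcongr
      _ ≤ B * (exp ((q + 1) / 3) * (3 * q) ^ q * Hfun q t) :=
          mul_le_mul_of_nonneg_left ((exp_two_mul_mul_le_rpow_one_third ht0 hsmall).trans
            (rpow_one_third_le_mul_Hfun hq ht0 ht1)) hB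
      _ ≤ B * ((exp ((q + 1) / 3) * (3 * q) ^ q + (q + 4) ^ q) * L ^ (q + 1) * Hfun q t) := by
          refine mul_le_mul_of_nonneg_left (mul_le_mul_of_nonneg_right ?_ hH) hB
          nlinarith [rpow_nonneg (show (0 : ℝ) ≤ q + 4 by linarith) q]
      _ = _ := by ring
  · calc D ≤ B * L := hbdd.trans (by gcongr; linarith)
      _ ≤ B * ((q + 4) ^ q * L ^ (q + 1) * Hfun q t) := by
          gcongr
          exact le_mul_rpow_mul_Hfun_of_exp_lt hq hL hlarge ht1
      _ ≤ B * ((exp ((q + 1) / 3) * (3 * q) ^ q + (q + 4) ^ q) * L ^ (q + 1) * Hfun q t) := by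
          refine mul_le_mul_of_nonneg_left (mul_le_mul_of_nonneg_right ?_ hH) hB
          nlinarith
      _ = _ := by ring

end LogarithmicModulus

/-- for every `κ > 1` there is `C_κ > 0` such that for every
`g ∈ GL_d(ℝ)` and nonzero `x, y ∈ ℝ^d`,
`|log(‖gx‖/‖x‖) - log(‖gy‖/‖y‖)| ≤ C_κ (1 + log N g)^κ H_{κ-1}(d(x̄, ȳ))`. -/
theorem stmt9 (d : ℕ) (κ : ℝ) (hκ : 1 < κ) :
    ∃ C > 0, ∀ (g : GL (Fin d) ℝ) (x y : EuclideanSpace ℝ (Fin d)), x ≠ 0 → y ≠ 0 →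
      |Real.log (‖Matrix.toEuclideanCLM (𝕜 := ℝ)
            ((g : GL (Fin d) ℝ) : Matrix (Fin d) (Fin d) ℝ) x‖ / ‖x‖) -
        Real.log (‖Matrix.toEuclideanCLM (𝕜 := ℝ)
            ((g : GL (Fin d) ℝ) : Matrix (Fin d) (Fin d) ℝ) y‖ / ‖y‖)| ≤
      C * (1 + Real.log (matN g)) ^ κ * Hfun (κ - 1) (projDist x y) := by
  obtain ⟨q, hq, rfl⟩ : ∃ q, 0 < q ∧ κ = q + 1 := ⟨κ - 1, by linarith, by ring⟩
  refine ⟨2 * (exp ((q + 1) / 3) * (3 * q) ^ q + (q + 4) ^ q), by positivity,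
    fun g x y hx hy => ?_⟩
  have hT : ‖Matrix.toEuclideanCLM (𝕜 := ℝ) g.val‖ ≤ matN g := le_max_left _ _
  have hS : ‖Matrix.toEuclideanCLM (𝕜 := ℝ) (g⁻¹).val‖ ≤ matN g := le_max_right _ _
  have hST := Matrix.leftInverse_toEuclideanCLM_inv g
  rw [add_sub_cancel_right]
  refine le_mul_one_add_log_rpow_mul_Hfun hq (one_le_of_leftInverse hT hS hST hx) zero_le_two
    (projDist_nonneg x y) (projDist_le_one hx hy) ?_ ?_
  · calc _ ≤ √2 * matN g ^ 2 * projDist x y := by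
          rw [projDist_eq_sqrt hx hy]
          exact abs_log_norm_apply_div_sub_le hT hS hST hx hy
      _ ≤ 2 * matN g ^ 2 * projDist x y := by
          gcongr
          · exact projDist_nonneg x y
          · exact (sqrt_le_left zero_le_two).2 (by norm_num)
  · have hσx := abs_log_norm_apply_div_le hT hS hST hx
    have hσy := abs_log_norm_apply_div_le hT hS hST hy
    exact (abs_sub _ _).trans (by linarith)
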